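/- Let u ∈ ℂ with |u| = 1, let τ = −1 + i√2, τ′ = −u·conj(τ), and let R₁ = [[u², τ, τ′], [0, conj(u), 0], [0, 0, conj(u)]] and J = [[0,0,1],[1,0,0],[0,1,0]]. Then the characteristic polynomial of R₁J equals X³ − τX² + conj(τ)X − 1, its roots are ζ₈ = e^{iπ/4}, ζ₈³ and −1, and consequently (R₁J)⁸ = I while (R₁J)ᵏ ≠ I for every integer 1 ≤ k ≤ 7; that is, R₁J has order exactly 8 in GL(3,ℂ), independently of u. -/

import Mathlib

/-!
Since `|u| = 1`, the characteristic polynomial of `R₁ J` does not depend on `u`; it equals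
`(X² − i√2 X − 1)(X + 1) = (X − ζ₈)(X − ζ₈³)(X + 1)`. This cubic divides `X⁸ − 1`, so
Cayley–Hamilton gives `(R₁ J)⁸ = 1`. Its root `ζ₈` is an eigenvalue and a primitive 8th root of
unity, so `(R₁ J)ᵏ = 1` forces `8 ∣ k`.
-/

open Matrix Polynomial

noncomputable section

/-- The matrix R₁ for τ = −1 + i√2 and τ′ = −u·conj(τ). -/
def R₁ (u : ℂ) : Matrix (Fin 3) (Fin 3) ℂ :=
  let τ : ℂ := -1 + Complex.I * Real.sqrt 2
  !![u ^ 2, τ, -u * starRingEnd ℂ τ; 0, starRingEnd ℂ u, 0; 0, 0, starRingEnd ℂ u]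

/-- The matrix J = [[0,0,1],[1,0,0],[0,1,0]]. -/
def Jmat : Matrix (Fin 3) (Fin 3) ℂ := !![0, 0, 1; 1, 0, 0; 0, 1, 0]

/-- ζ₈ = e^{iπ/4}. -/
def ζ₈ : ℂ := Complex.exp (Real.pi * Complex.I / 4)

open Complex ComplexConjugate

local notation "τ" => (-1 + I * √2 : ℂ)

local notation "χ" => (X ^ 3 - C τ * X ^ 2 + C (conj τ) * X - 1 : ℂ[X])

theorem Matrix.pow_eq_one_of_charpoly_dvd {n R : Type*} [Fintype n] [DecidableEq n] [CommRing R]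
    {A : Matrix n n R} {m : ℕ} (h : A.charpoly ∣ X ^ m - 1) : A ^ m = 1 := by
  obtain ⟨q, hq⟩ := h
  have hA : aeval A (X ^ m - 1 : R[X]) = 0 := by
    rw [hq, map_mul, aeval_self_charpoly, zero_mul]
  simpa [sub_eq_zero] using hA

theorem Matrix.pow_eq_one_of_isRoot_charpoly {n K : Type*} [Fintype n] [DecidableEq n] [Field K]
    {A : Matrix n n K} {μ : K} (hμ : A.charpoly.IsRoot μ) {m : ℕ} (hA : A ^ m = 1) :
    μ ^ m = 1 := by
  have hmem := spectrum.pow_mem_pow A m (mem_spectrum_iff_isRoot_charpoly.2 hμ)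
  rw [hA] at hmem
  rcases subsingleton_or_nontrivial (Matrix n n K) with _ | _
  · simp [spectrum.of_subsingleton] at hmem
  · simpa [spectrum.one_eq] using hmem

theorem Polynomial.X_sub_C_mul_X_sub_C_mul_X_sub_C {R : Type*} [CommRing R] (a b c : R) :
    (X - C a) * (X - C b) * (X - C c) =
      X ^ 3 - C (a + b + c) * X ^ 2 + C (a * b + b * c + c * a) * X - C (a * b * c) := by
  simp only [map_add, map_mul]
  ring

lemma sq_sqrt_two : (√2 : ℂ) ^ 2 = 2 := by
  exact_mod_cast Real.sq_sqrt zero_le_two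

lemma ζ₈_eq : ζ₈ = (√2 / 2 : ℂ) * (1 + I) := by
  rw [ζ₈, show (Real.pi : ℂ) * I / 4 = ↑(Real.pi / 4) * I by push_cast; ring, exp_mul_I,
    ← ofReal_cos, ← ofReal_sin, Real.cos_pi_div_four, Real.sin_pi_div_four]
  push_cast
  ring

lemma isPrimitiveRoot_ζ₈ : IsPrimitiveRoot ζ₈ 8 := by
  convert isPrimitiveRoot_exp 8 (by norm_num) using 2
  rw [ζ₈]
  push_cast
  ring_nf

lemma ζ₈_sq : ζ₈ ^ 2 = I := by
  rw [ζ₈_eq]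
  linear_combination (1 + I) ^ 2 / 4 * sq_sqrt_two + 1 / 2 * I_sq

lemma ζ₈_pow_four : ζ₈ ^ 4 = -1 := by
  rw [show 4 = 2 * 2 from rfl, pow_mul, ζ₈_sq, I_sq]

lemma ζ₈_add_ζ₈_pow_three : ζ₈ + ζ₈ ^ 3 = I * √2 := by
  linear_combination ζ₈ * ζ₈_sq + (1 + I) * ζ₈_eq + (√2 / 2 : ℂ) * I_sq

lemma conj_τ : conj τ = -1 - I * √2 := by
  simp [Complex.ext_iff]

lemma R₁_mul_Jmat (u : ℂ) :
    R₁ u * Jmat = !![τ, u * (1 + I * √2), u ^ 2; conj u, 0, 0; 0, conj u, 0] := by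
  simp [R₁, Jmat, conj_τ]
  ring

lemma charpoly_R₁_mul_Jmat {u : ℂ} (hu : u * conj u = 1) : (R₁ u * Jmat).charpoly = χ := by
  have hC : C u * C (conj u) = 1 := by rw [← C_mul, hu, C_1]
  rw [conj_τ, charpoly, det_fin_three, R₁_mul_Jmat]
  simp only [Fin.isValue, charmatrix_apply_eq, of_apply, cons_val', cons_val_zero, cons_val_fin_one,
    map_add, map_neg, map_one, map_mul, cons_val_one, map_zero, sub_zero, cons_val, ne_eq,
    Fin.reduceEq, not_false_eq_true, charmatrix_apply_ne, neg_zero, mul_zero, mul_neg, zero_mul,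
    zero_ne_one, one_ne_zero, neg_mul, neg_neg, add_zero, map_pow, map_sub]
  linear_combination (-(1 + C I * C (√2 : ℂ)) * X - C u * C (conj u) - 1) * hC

lemma χ_eq_prod : χ = (X - C ζ₈) * (X - C (ζ₈ ^ 3)) * (X - C (-1)) := by
  have he₁ : ζ₈ + ζ₈ ^ 3 + -1 = τ := by linear_combination ζ₈_add_ζ₈_pow_three
  have he₂ : ζ₈ * ζ₈ ^ 3 + ζ₈ ^ 3 * -1 + -1 * ζ₈ = -1 - I * √2 := by
    linear_combination ζ₈_pow_four - ζ₈_add_ζ₈_pow_three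
  have he₃ : ζ₈ * ζ₈ ^ 3 * -1 = 1 := by linear_combination -ζ₈_pow_four
  rw [X_sub_C_mul_X_sub_C_mul_X_sub_C, he₁, he₂, he₃, conj_τ, C_1]

lemma χ_dvd_X_pow_eight_sub_one : χ ∣ X ^ 8 - 1 := by
  set s : ℂ[X] := C (I * √2)
  have hs : s ^ 2 = -2 := by
    rw [← C_pow, mul_pow, I_sq, sq_sqrt_two, neg_one_mul, map_neg, map_ofNat]
  -- `X⁴ + 1 = (X² - s X - 1) (X² + s X - 1)`, and `χ = (X² - s X - 1) (X + 1)`.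
  refine ⟨(X ^ 2 + s * X - 1) * (X - 1) * (X ^ 2 + 1), ?_⟩
  rw [conj_τ, map_add, map_sub, map_neg, map_one]
  linear_combination X ^ 2 * (X ^ 4 - 1) * hs

/-- the characteristic polynomial of R₁J is X³ − τX² + conj(τ)X − 1,
its roots are ζ₈, ζ₈³, −1, and R₁J has order exactly 8, independently of u. -/
theorem stmt_7 (u : ℂ) (hu : ‖u‖ = 1) :
    (R₁ u * Jmat).charpoly =
      X ^ 3 - C (-1 + Complex.I * Real.sqrt 2) * X ^ 2
        + C (starRingEnd ℂ (-1 + Complex.I * Real.sqrt 2)) * X - 1 ∧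
    (R₁ u * Jmat).charpoly = (X - C ζ₈) * (X - C (ζ₈ ^ 3)) * (X - C (-1)) ∧
    (R₁ u * Jmat) ^ 8 = 1 ∧
    ∀ k : ℕ, 1 ≤ k → k ≤ 7 → (R₁ u * Jmat) ^ k ≠ 1 := by
  have hchar : (R₁ u * Jmat).charpoly = χ :=
    charpoly_R₁_mul_Jmat (by rw [mul_conj', hu]; norm_num)
  have hprod := hchar.trans χ_eq_prod
  refine ⟨hchar, hprod, pow_eq_one_of_charpoly_dvd (hchar ▸ χ_dvd_X_pow_eight_sub_one), ?_⟩
  intro k hk₁ hk₇ hk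
  have hroot : (R₁ u * Jmat).charpoly.IsRoot ζ₈ := by simp [hprod]
  have h8 := isPrimitiveRoot_ζ₈.dvd_of_pow_eq_one k (pow_eq_one_of_isRoot_charpoly hroot hk)
  omega

end
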